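/- Let n ≥ 1, γ ≥ 0, α ≥ 0, v ∈ ℝ, w > 0, and set b = 1/(γ + α + 1/w). Let Ĝ be an n × n row-stochastic matrix (nonnegative entries, each row summing to exactly 1). Then the unique vector x ∈ ℝⁿ satisfying x_i = b(1 + γ v + α ∑_j Ĝ_{ij} x_j) for all i is the constant vector with x_i = (1 + γ v)/(γ + 1/w) = (1 + γv)w/(γw + 1) for every i, independent of the network Ĝ. (Equilibrium actions under homogeneous abilities, Proposition 2 and equation (8).) -/
import Mathlib


/-- Under homogeneous abilities `w` and a row-stochastic matrix
`Ĝ`, the unique solution of `x_i = b(1 + γv + α ∑_j Ĝ_{ij} x_j)`,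
`b = 1/(γ + α + 1/w)`, is the constant vector `(1 + γv)w/(γw + 1)`,
independent of the network. -/
theorem equilibrium_action_homogeneous
    (n : ℕ) (hn : 1 ≤ n) (γ α v w : ℝ) (hγ : 0 ≤ γ) (hα : 0 ≤ α) (hw : 0 < w)
    (Ghat : Matrix (Fin n) (Fin n) ℝ)
    (hpos : ∀ i j, 0 ≤ Ghat i j)
    (hrow : ∀ i, ∑ j, Ghat i j = 1) :
    ∀ x : Fin n → ℝ,
      (∀ i, x i = (1 / (γ + α + 1 / w)) * (1 + γ * v + α * ∑ j, Ghat i j * x j))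
        ↔ x = fun _ => (1 + γ * v) * w / (γ * w + 1) := by
  have hw' : (0:ℝ) < 1 / w := by positivity
  have hD : (0:ℝ) < γ + α + 1 / w := by positivity
  have hβ : (0:ℝ) < γ + 1 / w := by positivity
  set c : ℝ := (1 + γ * v) / (γ + 1 / w) with hcdef
  have hβc : (γ + 1 / w) * c = 1 + γ * v := by
    rw [hcdef, mul_div_cancel₀ _ (ne_of_gt hβ)]
  have hc : (1 + γ * v) * w / (γ * w + 1) = c := by
    rw [hcdef, div_eq_div_iff (by positivity) (ne_of_gt hβ)]
    field_simp
  intro x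
  constructor
  · intro hx
    have heq : ∀ i, (γ + α + 1 / w) * x i
        = 1 + γ * v + α * ∑ j, Ghat i j * x j := by
      intro i
      rw [hx i]
      field_simp
    have hne : Nonempty (Fin n) := ⟨⟨0, hn⟩⟩
    obtain ⟨iM, _, hiM⟩ := Finset.exists_max_image Finset.univ x Finset.univ_nonempty
    obtain ⟨im, _, him⟩ := Finset.exists_min_image Finset.univ x Finset.univ_nonempty
    have hSM : ∑ j, Ghat iM j * x j ≤ x iM := by
      calc ∑ j, Ghat iM j * x j ≤ ∑ j, Ghat iM j * x iM :=
            Finset.sum_le_sum fun j _ =>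
              mul_le_mul_of_nonneg_left (hiM j (Finset.mem_univ j)) (hpos iM j)
        _ = x iM := by rw [← Finset.sum_mul, hrow iM, one_mul]
    have hSm : x im ≤ ∑ j, Ghat im j * x j := by
      calc x im = ∑ j, Ghat im j * x im := by rw [← Finset.sum_mul, hrow im, one_mul]
        _ ≤ ∑ j, Ghat im j * x j :=
            Finset.sum_le_sum fun j _ =>
              mul_le_mul_of_nonneg_left (him j (Finset.mem_univ j)) (hpos im j)
    have hMle : x iM ≤ c := by
      have h1 := heq iM
      nlinarith [mul_le_mul_of_nonneg_left hSM hα]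
    have hmge : c ≤ x im := by
      have h1 := heq im
      nlinarith [mul_le_mul_of_nonneg_left hSm hα]
    funext i
    have h1 := hiM i (Finset.mem_univ i)
    have h2 := him i (Finset.mem_univ i)
    show x i = (1 + γ * v) * w / (γ * w + 1)
    rw [hc]
    linarith
  · intro hx
    subst hx
    intro i
    simp only
    have hsum : ∑ j, Ghat i j * ((1 + γ * v) * w / (γ * w + 1))
        = (1 + γ * v) * w / (γ * w + 1) := by
      rw [← Finset.sum_mul, hrow i, one_mul]
    rw [hsum, hc]
    rw [one_div, inv_mul_eq_div, eq_div_iff (ne_of_gt hD)]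
    linear_combination hβc
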